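/- Let d ≥ 1 and let Δ be a pure d-dimensional flag-no-square simplicial complex in which every (d−1)-dimensional face is contained in at least two facets. Then for every vertex v of Δ, the total number of vertices of Δ satisfies f_0(Δ) ≥ f_{d−1}(lk_Δ v) + f_0(lk_Δ v) + 1. (Equivalently, for each facet F of lk_Δ v there is a vertex w outside the star of v with F ∪ {w} ∈ Δ, and any such assignment F ↦ w is injective.) -/

import Mathlib

open Finset

variable {V : Type} [DecidableEq V] [Fintype V]

/-- `K` is (the set of faces of) an abstract simplicial complex on `V`:
nonempty (contains the empty face) and closed under taking subsets. -/
def IsComplex (K : Finset (Finset V)) : Prop :=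
  ∅ ∈ K ∧ ∀ σ ∈ K, ∀ τ ⊆ σ, τ ∈ K

/-- The facets (maximal faces) of `K`. -/
def facets (K : Finset (Finset V)) : Finset (Finset V) :=
  K.filter fun σ => ∀ τ ∈ K, σ ⊆ τ → τ = σ

/-- `K` is pure `d`-dimensional: every facet has `d + 1` vertices. -/
def IsPure (K : Finset (Finset V)) (d : ℕ) : Prop :=
  ∀ σ ∈ facets K, σ.card = d + 1

/-- `fNum K i` is the number of `i`-dimensional faces (faces with `i + 1` vertices). -/
def fNum (K : Finset (Finset V)) (i : ℕ) : ℕ :=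
  (K.filter fun σ => σ.card = i + 1).card

/-- `K` is flag: every set of vertices of `K` that are pairwise joined by
edges of `K` is a face of `K`. -/
def IsFlag (K : Finset (Finset V)) : Prop :=
  ∀ τ : Finset V, (∀ v ∈ τ, ({v} : Finset V) ∈ K) →
    (∀ u ∈ τ, ∀ w ∈ τ, u ≠ w → ({u, w} : Finset V) ∈ K) → τ ∈ K

/-- `K` has no induced 4-cycle: there are no four distinct vertices `a b c d`
with `ab, bc, cd, da` faces and `ac, bd` non-faces. -/
def NoSquare (K : Finset (Finset V)) : Prop :=
  ¬ ∃ a b c d : V, ({a, b, c, d} : Finset V).card = 4 ∧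
    ({a, b} : Finset V) ∈ K ∧ ({b, c} : Finset V) ∈ K ∧
    ({c, d} : Finset V) ∈ K ∧ ({d, a} : Finset V) ∈ K ∧
    ({a, c} : Finset V) ∉ K ∧ ({b, d} : Finset V) ∉ K

/-- Every face with `d` vertices (i.e. of dimension `d - 1`) is contained in
at least two facets. -/
def NoFree (K : Finset (Finset V)) (d : ℕ) : Prop :=
  ∀ σ ∈ K, σ.card = d → 2 ≤ ((facets K).filter fun F => σ ⊆ F).card

/-- The link of a face `σ`. -/
def link (K : Finset (Finset V)) (σ : Finset V) : Finset (Finset V) :=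
  K.filter fun τ => τ ∩ σ = ∅ ∧ τ ∪ σ ∈ K

/-! Let `v` be a vertex and `F` a facet of `lk v`. Since `F` lies in two facets, there is a
facet `F ∪ {w}` with `w ≠ v`, and flagness together with purity forces `vw ∉ K`: otherwise
`F ∪ {v, w}` would be a face with `d + 2` vertices. If two facets `F ≠ F'` of `lk v` received
the same `w`, the no-square condition applied to the 4-cycles `a v c w` (`a ∈ F`, `c ∈ F'`)
shows that all edges between `F` and `F'` are present, so by flagness `F ∪ F' ∪ {w}` would be
a face with more than `d + 1` vertices. Hence `F ↦ w` injects the facets of `lk v` into the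
non-neighbours of `v`, while the vertices of `lk v` together with `v` are neighbours of `v`. -/

section Complex

variable {K : Finset (Finset V)}

section

omit [Fintype V]

lemma IsComplex.pair_mem (hK : IsComplex K) {σ : Finset V} (hσ : σ ∈ K) {u w : V}
    (hu : u ∈ σ) (hw : w ∈ σ) : ({u, w} : Finset V) ∈ K :=
  hK.2 σ hσ _ (insert_subset hu (singleton_subset_iff.mpr hw))

lemma mem_link_singleton {τ : Finset V} {v : V} :
    τ ∈ link K {v} ↔ τ ∈ K ∧ v ∉ τ ∧ insert v τ ∈ K := by
  rw [link, mem_filter, union_singleton, ← disjoint_iff_inter_eq_empty,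
    disjoint_singleton_right]

lemma IsFlag.union_mem (hK : IsComplex K) (hflag : IsFlag K) {σ τ : Finset V}
    (hσ : σ ∈ K) (hτ : τ ∈ K)
    (hcross : ∀ a ∈ σ, ∀ b ∈ τ, a ≠ b → ({a, b} : Finset V) ∈ K) : σ ∪ τ ∈ K := by
  refine hflag _ (fun u hu => ?_) (fun u hu w hw huw => ?_)
  · rcases mem_union.mp hu with hu | hu
    · exact hK.2 σ hσ _ (singleton_subset_iff.mpr hu)
    · exact hK.2 τ hτ _ (singleton_subset_iff.mpr hu)
  · rcases mem_union.mp hu with hu | hu <;> rcases mem_union.mp hw with hw | hw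
    · exact hK.pair_mem hσ hu hw
    · exact hcross u hu w hw huw
    · exact pair_comm u w ▸ hcross w hw u hu huw.symm
    · exact hK.pair_mem hτ hu hw

lemma NoSquare.pair_mem_of_cycle (hK : IsComplex K) (hns : NoSquare K) {a b c d : V}
    (hab : ({a, b} : Finset V) ∈ K) (hbc : ({b, c} : Finset V) ∈ K)
    (hcd : ({c, d} : Finset V) ∈ K) (hda : ({d, a} : Finset V) ∈ K)
    (hac : ({a, c} : Finset V) ∉ K) : ({b, d} : Finset V) ∈ K := by
  by_contra hbd
  have h_singleton : ∀ x y : V, ({x, y} : Finset V) ∈ K → ({x} : Finset V) ∈ K :=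
    fun x y hxy => hK.2 _ hxy _ (by simp)
  -- each coincidence among `a b c d` turns a cycle edge into one of the two missing diagonals
  have hcard : #({a, b, c, d} : Finset V) = 4 := card_eq_four.mpr
    ⟨a, b, c, d, by rintro rfl; exact hbd (pair_comm d a ▸ hda),
      by rintro rfl; exact hac (by simpa using h_singleton _ _ hab),
      by rintro rfl; exact hac (pair_comm c a ▸ hcd),
      by rintro rfl; exact hac hab,
      by rintro rfl; exact hbd (by simpa using h_singleton _ _ hbc),
      by rintro rfl; exact hbd hbc, rfl⟩
  exact hns ⟨a, b, c, d, hcard, hab, hbc, hcd, hda, hac, hbd⟩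

end

lemma fNum_zero_eq_card_filter :
    fNum K 0 = #(univ.filter fun u => ({u} : Finset V) ∈ K) := by
  have h : K.filter (fun σ => #σ = 0 + 1) =
      (univ.filter fun u => ({u} : Finset V) ∈ K).image singleton := by
    ext σ
    simp only [mem_filter, mem_image, mem_univ, true_and, zero_add, card_eq_one]
    constructor
    · rintro ⟨hσ, u, rfl⟩
      exact ⟨u, hσ, rfl⟩
    · rintro ⟨u, hu, rfl⟩
      exact ⟨hu, u, rfl⟩
  rw [fNum, h, card_image_of_injective _ singleton_injective]

lemma card_le_of_isPure {d : ℕ} (hpure : IsPure K d) {σ : Finset V} (hσ : σ ∈ K) :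
    #σ ≤ d + 1 := by
  obtain ⟨τ, hστ, hτ⟩ := K.exists_le_maximal hσ
  have hτ_facet : τ ∈ facets K :=
    mem_filter.mpr ⟨hτ.prop, fun ρ hρ hτρ => (hτ.eq_of_le hρ hτρ).symm⟩
  exact hpure τ hτ_facet ▸ card_le_card hστ

lemma exists_insert_mem_not_adj_of_mem_link (hK : IsComplex K) {d : ℕ} (hpure : IsPure K d)
    (hflag : IsFlag K) (hfree : NoFree K d) {v : V} {F : Finset V} (hF : F ∈ link K {v})
    (hcard : #F = d) : ∃ w, insert w F ∈ K ∧ ({v, w} : Finset V) ∉ K := by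
  obtain ⟨hFK, hvF, hvFK⟩ := mem_link_singleton.mp hF
  obtain ⟨G, hG, hGv⟩ := exists_mem_ne (hfree F hFK hcard) (insert v F)
  obtain ⟨hG_facet, hFG⟩ := mem_filter.mp hG
  obtain ⟨w, hwF, rfl⟩ := exists_eq_insert_iff.mpr ⟨hFG, by rw [hcard, hpure _ hG_facet]⟩
  have hwFK : insert w F ∈ K := (mem_filter.mp hG_facet).1
  refine ⟨w, hwFK, fun hvw => ?_⟩
  have hunion : insert v F ∪ insert w F ∈ K := by
    refine hflag.union_mem hK hvFK hwFK fun a ha b hb _ => ?_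
    rcases mem_insert.mp ha with rfl | ha
    · rcases mem_insert.mp hb with rfl | hb
      · exact hvw
      · exact hK.pair_mem hvFK (mem_insert_self a F) (mem_insert_of_mem hb)
    · exact hK.pair_mem hwFK (mem_insert_of_mem ha) hb
  have hface : insert v (insert w F) ∈ K :=
    hK.2 _ hunion _ (insert_subset (by simp) (by simp))
  have hvwF : v ∉ insert w F :=
    mem_insert.not.mpr (not_or.mpr ⟨fun h => hGv (by rw [h]), hvF⟩)
  have := card_le_of_isPure hpure hface
  rw [card_insert_of_notMem hvwF, card_insert_of_notMem hwF, hcard] at this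
  omega

lemma eq_of_insert_mem_of_mem_link (hK : IsComplex K) {d : ℕ} (hpure : IsPure K d)
    (hflag : IsFlag K) (hns : NoSquare K) {v w : V} {F F' : Finset V}
    (hF : F ∈ link K {v}) (hF' : F' ∈ link K {v}) (hcard : #F = d) (hcard' : #F' = d)
    (hwF : insert w F ∈ K) (hwF' : insert w F' ∈ K) (hvw : ({v, w} : Finset V) ∉ K) :
    F = F' := by
  obtain ⟨-, -, hvF⟩ := mem_link_singleton.mp hF
  obtain ⟨-, -, hvF'⟩ := mem_link_singleton.mp hF'
  have hw_notMem : w ∉ F ∪ F' := fun hw => by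
    rcases mem_union.mp hw with hw | hw
    · exact hvw (hK.pair_mem hvF (mem_insert_self v F) (mem_insert_of_mem hw))
    · exact hvw (hK.pair_mem hvF' (mem_insert_self v F') (mem_insert_of_mem hw))
  -- a missing edge `ac` would make `a v c w` an induced 4-cycle
  have hcross : ∀ a ∈ F, ∀ c ∈ F', ({a, c} : Finset V) ∈ K := fun a ha c hc => by
    by_contra hac
    exact hvw <| hns.pair_mem_of_cycle hK
      (hK.pair_mem hvF (mem_insert_of_mem ha) (mem_insert_self v F))
      (hK.pair_mem hvF' (mem_insert_self v F') (mem_insert_of_mem hc))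
      (hK.pair_mem hwF' (mem_insert_of_mem hc) (mem_insert_self w F'))
      (hK.pair_mem hwF (mem_insert_self w F) (mem_insert_of_mem ha)) hac
  have hface : insert w (F ∪ F') ∈ K := by
    rw [insert_union_distrib]
    refine hflag.union_mem hK hwF hwF' fun a ha c hc _ => ?_
    rcases mem_insert.mp ha with rfl | haF
    · exact hK.pair_mem hwF' (mem_insert_self a F') hc
    rcases mem_insert.mp hc with rfl | hcF'
    · exact hK.pair_mem hwF (mem_insert_of_mem haF) (mem_insert_self c F)
    · exact hcross a haF c hcF'
  have hle : #(F ∪ F') ≤ d := by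
    have := card_le_of_isPure hpure hface
    rw [card_insert_of_notMem hw_notMem] at this
    omega
  calc F = F ∪ F' := eq_of_subset_of_card_le subset_union_left (hcard ▸ hle)
    _ = F' := (eq_of_subset_of_card_le subset_union_right (hcard' ▸ hle)).symm

lemma fNum_link_le_card_not_adj (hK : IsComplex K) {d : ℕ} (hd : 1 ≤ d) (hpure : IsPure K d)
    (hflag : IsFlag K) (hns : NoSquare K) (hfree : NoFree K d) (v : V) :
    fNum (link K {v}) (d - 1) ≤ #(univ.filter fun u => ({v, u} : Finset V) ∉ K) := by
  rw [fNum, Nat.sub_add_cancel hd]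
  have hT : ∀ F ∈ (link K {v}).filter (#· = d), F ∈ link K {v} ∧ #F = d :=
    fun F hF => mem_filter.mp hF
  have : Nonempty V := ⟨v⟩
  choose! w hwK hvw using fun F hF =>
    exists_insert_mem_not_adj_of_mem_link hK hpure hflag hfree (hT F hF).1 (hT F hF).2
  refine card_le_card_of_injOn w (fun F hF => mem_filter.mpr ⟨mem_univ _, hvw F hF⟩) ?_
  exact fun F hF F' hF' h => eq_of_insert_mem_of_mem_link hK hpure hflag hns (hT F hF).1
    (hT F' hF').1 (hT F hF).2 (hT F' hF').2 (hwK F hF) (h ▸ hwK F' hF') (hvw F hF)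

lemma card_link_vertices_lt_card_adj {v : V} (hv : ({v} : Finset V) ∈ K) :
    #(univ.filter fun u => ({u} : Finset V) ∈ link K {v}) <
      #(univ.filter fun u => ({v, u} : Finset V) ∈ K) := by
  have hsub : univ.filter (fun u => ({u} : Finset V) ∈ link K {v}) ⊆
      univ.filter fun u => ({v, u} : Finset V) ∈ K :=
    fun u hu => mem_filter.mpr ⟨mem_univ u, (mem_link_singleton.mp (mem_filter.mp hu).2).2.2⟩
  refine card_lt_card ((ssubset_iff_of_subset hsub).mpr ⟨v, ?_, fun hvL => ?_⟩)
  · exact mem_filter.mpr ⟨mem_univ v, by simpa using hv⟩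
  · exact (mem_link_singleton.mp (mem_filter.mp hvL).2).2.1 (mem_singleton_self v)

end Complex

/-- In a pure `d`-dimensional (`d ≥ 1`) flag-no-square simplicial complex with
no free `(d-1)`-faces, for every vertex `v` the number of vertices of the
complex is at least the number of facets of the link of `v`, plus the number of
vertices of the link of `v`, plus one. -/
theorem vertices_ge_link_facets_add_link_vertices {V : Type} [DecidableEq V] [Fintype V]
    (d : ℕ) (hd : 1 ≤ d) (K : Finset (Finset V))
    (hK : IsComplex K) (hvert : ∀ v : V, ({v} : Finset V) ∈ K)
    (hpure : IsPure K d) (hflag : IsFlag K) (hns : NoSquare K)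
    (hfree : NoFree K d) (v : V) :
    fNum (link K {v}) (d - 1) + fNum (link K {v}) 0 + 1 ≤ fNum K 0 := by
  have hfacets := fNum_link_le_card_not_adj hK hd hpure hflag hns hfree v
  have hvertices := card_link_vertices_lt_card_adj (K := K) (hvert v)
  have hsplit := card_filter_add_card_filter_not (s := univ)
    fun u => ({v, u} : Finset V) ∈ K
  rw [fNum_zero_eq_card_filter, fNum_zero_eq_card_filter,
    filter_true_of_mem fun u _ => hvert u]
  omega
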